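/- Every ψ ∈ A_k maps the subgroup F_k = ⟨x_1,…,x_k⟩ of F_{k+1} onto itself, giving a restriction homomorphism p: A_k → Aut(F_k). Moreover, for every ψ ∈ ker(p) (i.e., ψ ∈ A_k fixing each x_i for 1 ≤ i ≤ k) there exist unique elements l, r ∈ F_k with ψ(x_0) = l·x_0·r, and the map j(ψ) = (l^{-1}, r) is a group isomorphism from ker(p) onto F_k × F_k. -/

import Mathlib

noncomputable section

namespace PRA

open FreeGroup

variable {α : Type*} [DecidableEq α]

/-- The endomorphism of the free group sending `x_i ↦ x_j x_i` and fixing other generators. -/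
def lA (i j : α) : FreeGroup α →* FreeGroup α :=
  FreeGroup.lift fun p => if p = i then FreeGroup.of j * FreeGroup.of p else FreeGroup.of p

/-- The endomorphism of the free group sending `x_i ↦ x_j⁻¹ x_i` and fixing other generators. -/
def lB (i j : α) : FreeGroup α →* FreeGroup α :=
  FreeGroup.lift fun p => if p = i then (FreeGroup.of j)⁻¹ * FreeGroup.of p else FreeGroup.of p

/-- The endomorphism of the free group sending `x_i ↦ x_i x_j` and fixing other generators. -/
def rA (i j : α) : FreeGroup α →* FreeGroup α :=
  FreeGroup.lift fun p => if p = i then FreeGroup.of p * FreeGroup.of j else FreeGroup.of p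

/-- The endomorphism of the free group sending `x_i ↦ x_i x_j⁻¹` and fixing other generators. -/
def rB (i j : α) : FreeGroup α →* FreeGroup α :=
  FreeGroup.lift fun p => if p = i then FreeGroup.of p * (FreeGroup.of j)⁻¹ else FreeGroup.of p

lemma lBA (i j : α) (h : i ≠ j) : (lB i j).comp (lA i j) = MonoidHom.id _ := by
  ext p
  by_cases hp : p = i
  · subst hp
    simp [lA, lB, Ne.symm h]
  · simp [lA, lB, hp]

lemma lAB (i j : α) (h : i ≠ j) : (lA i j).comp (lB i j) = MonoidHom.id _ := by
  ext p
  by_cases hp : p = i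
  · subst hp
    simp [lA, lB, Ne.symm h]
  · simp [lA, lB, hp]

lemma rBA (i j : α) (h : i ≠ j) : (rB i j).comp (rA i j) = MonoidHom.id _ := by
  ext p
  by_cases hp : p = i
  · subst hp
    simp [rA, rB, Ne.symm h]
  · simp [rA, rB, hp]

lemma rAB (i j : α) (h : i ≠ j) : (rA i j).comp (rB i j) = MonoidHom.id _ := by
  ext p
  by_cases hp : p = i
  · subst hp
    simp [rA, rB, Ne.symm h]
  · simp [rA, rB, hp]

/-- The Nielsen automorphism `L_{ij} : x_i ↦ x_j x_i` (defined to be `1` when `i = j`). -/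
def nL (i j : α) : MulAut (FreeGroup α) :=
  if h : i = j then 1
  else MonoidHom.toMulEquiv (lA i j) (lB i j) (lBA i j h) (lAB i j h)

/-- The Nielsen automorphism `R_{ij} : x_i ↦ x_i x_j` (defined to be `1` when `i = j`). -/
def nR (i j : α) : MulAut (FreeGroup α) :=
  if h : i = j then 1
  else MonoidHom.toMulEquiv (rA i j) (rB i j) (rBA i j h) (rAB i j h)

/-- The generating set of the group `A_k`: Nielsen automorphisms `L_{ij}^±`, `R_{ij}^±`
of `F_{k+1} = ⟨x_0, x_1, …, x_k⟩` with `i ≠ j` and `j ≠ 0`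
(i.e. the C-generators, with `i = 0`, and the N-generators, with `i, j ≥ 1`). -/
def AgenSet (k : ℕ) : Set (MulAut (FreeGroup (Fin (k + 1)))) :=
  {φ | ∃ i j : Fin (k + 1), i ≠ j ∧ j ≠ 0 ∧
    (φ = nL i j ∨ φ = (nL i j)⁻¹ ∨ φ = nR i j ∨ φ = (nR i j)⁻¹)}

/-- The group `A_k ≤ Aut(F_{k+1})`. -/
def Ak (k : ℕ) : Subgroup (MulAut (FreeGroup (Fin (k + 1)))) :=
  Subgroup.closure (AgenSet k)

lemma nL_mem {k : ℕ} (i j : Fin (k + 1)) (hj : j ≠ 0) : nL i j ∈ Ak k := by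
  by_cases h : i = j
  · subst h
    rw [nL, dif_pos rfl]
    exact (Ak k).one_mem
  · exact Subgroup.subset_closure ⟨i, j, h, hj, Or.inl rfl⟩

lemma nR_mem {k : ℕ} (i j : Fin (k + 1)) (hj : j ≠ 0) : nR i j ∈ Ak k := by
  by_cases h : i = j
  · subst h
    rw [nR, dif_pos rfl]
    exact (Ak k).one_mem
  · exact Subgroup.subset_closure ⟨i, j, h, hj, Or.inr (Or.inr (Or.inl rfl))⟩

/-- `L_{ij}` as an element of the group `A_k`. -/
def Lg {k : ℕ} (i j : Fin (k + 1)) (hj : j ≠ 0) : Ak k := ⟨nL i j, nL_mem i j hj⟩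

/-- `R_{ij}` as an element of the group `A_k`. -/
def Rg {k : ℕ} (i j : Fin (k + 1)) (hj : j ≠ 0) : Ak k := ⟨nR i j, nR_mem i j hj⟩

end PRA
namespace PRA

/-- The subgroup `F_k = ⟨x_1,…,x_k⟩` of `F_{k+1} = ⟨x_0,x_1,…,x_k⟩`. -/
def Fsub (k : ℕ) : Subgroup (FreeGroup (Fin (k + 1))) :=
  Subgroup.closure (Set.range fun i : Fin k => FreeGroup.of i.succ)

/-- The canonical embedding `F_k ↪ F_{k+1}`, `x_i ↦ x_i` (`1 ≤ i ≤ k`). -/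
def embF (k : ℕ) : FreeGroup (Fin k) →* FreeGroup (Fin (k + 1)) :=
  FreeGroup.lift fun i : Fin k => FreeGroup.of i.succ

/-- The subgroup of `A_k` of automorphisms fixing each of `x_1, …, x_k`
(the kernel of the restriction homomorphism `p : A_k → Aut(F_k)`). -/
def Kker (k : ℕ) : Subgroup (Ak k) where
  carrier := {ψ | ∀ i : Fin k,
    (ψ : MulAut (FreeGroup (Fin (k + 1)))) (FreeGroup.of i.succ) = FreeGroup.of i.succ}
  one_mem' := fun _ => rfl
  mul_mem' := by
    intro a b ha hb i
    have h : ((a * b : Ak k) : MulAut (FreeGroup (Fin (k + 1)))) (FreeGroup.of i.succ)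
        = (a : MulAut (FreeGroup (Fin (k + 1))))
            ((b : MulAut (FreeGroup (Fin (k + 1)))) (FreeGroup.of i.succ)) := rfl
    rw [h, hb i, ha i]
  inv_mem' := by
    intro a ha i
    have h : ((a⁻¹ : Ak k) : MulAut (FreeGroup (Fin (k + 1))))
        = ((a : Ak k) : MulAut (FreeGroup (Fin (k + 1))))⁻¹ := rfl
    rw [h]
    conv_lhs => rw [← ha i]
    exact (a : MulAut (FreeGroup (Fin (k + 1)))).symm_apply_apply _

end PRA

/-!
The generators of `A_k` send `F_k` into itself and `x_0` into the double coset `F_k x_0 F_k`,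
and both properties survive composition; applying this to `ψ` and `ψ⁻¹` gives `ψ(F_k) = F_k` and
`ψ(x_0) = l x_0 r`. The pair `(l, r)` is unique: let `x_0` swap two copies of `F_k` and let `F_k`
act by left multiplication on the first copy; then `l x_0 r` sends the identity of the first copy
to `r` in the second, and the identity of the second copy to `l` in the first. Conversely
`(l, r) ↦ (x_0 ↦ l⁻¹ x_0 r)` is a homomorphism `F_k × F_k → ker p`, landing in `A_k` because
`(x_i, 1)` and `(1, x_i)` go to the C-generators `L_{0i}⁻¹` and `R_{0i}`; it is bijective by the
two facts above, and `j` is its inverse.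
-/

namespace DoubleCoset

variable {G : Type*} [Group G] {H K : Subgroup G} {a b x : G}

lemma mul_mem_doubleCoset_left (ha : a ∈ H) (hx : x ∈ doubleCoset b H K) :
    a * x ∈ doubleCoset b H K := by
  obtain ⟨h, hh, k, hk, rfl⟩ := mem_doubleCoset.1 hx
  exact mem_doubleCoset.2 ⟨a * h, mul_mem ha hh, k, hk, by group⟩

lemma mul_mem_doubleCoset_right (ha : a ∈ K) (hx : x ∈ doubleCoset b H K) :
    x * a ∈ doubleCoset b H K := by
  obtain ⟨h, hh, k, hk, rfl⟩ := mem_doubleCoset.1 hx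
  exact mem_doubleCoset.2 ⟨h, hh, k * a, mul_mem hk ha, by group⟩

end DoubleCoset

open DoubleCoset

section DoubleCosetStabilizer

variable {G : Type*} [Group G] (H : Subgroup G) (t : G)

def PreservesDoubleCoset (ψ : MulAut G) : Prop :=
  (∀ h ∈ H, ψ h ∈ H) ∧ ψ t ∈ doubleCoset t H H

variable {H t}

lemma PreservesDoubleCoset.one : PreservesDoubleCoset H t 1 :=
  ⟨fun _ hh => hh, mem_doubleCoset_self H H t⟩

lemma PreservesDoubleCoset.mul {ψ φ : MulAut G} (hψ : PreservesDoubleCoset H t ψ)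
    (hφ : PreservesDoubleCoset H t φ) : PreservesDoubleCoset H t (ψ * φ) := by
  refine ⟨fun h hh => hψ.1 _ (hφ.1 h hh), ?_⟩
  obtain ⟨a, ha, b, hb, hφt⟩ := mem_doubleCoset.1 hφ.2
  rw [MulAut.mul_apply, hφt, map_mul, map_mul]
  exact mul_mem_doubleCoset_right (hψ.1 b hb) (mul_mem_doubleCoset_left (hψ.1 a ha) hψ.2)

variable (H t)

def doubleCosetStabilizer : Subgroup (MulAut G) where
  carrier := {ψ | PreservesDoubleCoset H t ψ ∧ PreservesDoubleCoset H t ψ⁻¹}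
  one_mem' := ⟨.one, by rw [inv_one]; exact .one⟩
  mul_mem' ha hb := ⟨ha.1.mul hb.1, by rw [mul_inv_rev]; exact hb.2.mul ha.2⟩
  inv_mem' h := ⟨h.2, by rw [inv_inv]; exact h.1⟩

variable {H t}

lemma map_eq_of_mem_doubleCosetStabilizer {ψ : MulAut G} (hψ : ψ ∈ doubleCosetStabilizer H t) :
    H.map ψ.toMonoidHom = H := by
  refine le_antisymm ?_ fun h hh => ⟨ψ⁻¹ h, hψ.2.1 h hh, ψ.apply_symm_apply h⟩
  rintro _ ⟨h, hh, rfl⟩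
  exact hψ.1.1 h hh

end DoubleCosetStabilizer

lemma FreeGroup.range_le_iff {β G : Type*} [Group G] (f : FreeGroup β →* G) (H : Subgroup G) :
    f.range ≤ H ↔ ∀ b, f (FreeGroup.of b) ∈ H := by
  rw [MonoidHom.range_eq_map, ← FreeGroup.closure_range_of, MonoidHom.map_closure,
    Subgroup.closure_le, ← Set.range_comp, Set.range_subset_iff]
  rfl

namespace PRA

open FreeGroup

variable {k : ℕ}

lemma of_mem_Fsub {j : Fin (k + 1)} (hj : j ≠ 0) : of j ∈ Fsub k := by
  obtain ⟨i, rfl⟩ := Fin.exists_succ_eq.2 hj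
  exact Subgroup.subset_closure ⟨i, rfl⟩

lemma range_embF : (embF k).range = Fsub k := by
  rw [embF, range_lift_eq_closure]
  rfl

lemma preservesDoubleCoset_Fsub_of_forall {ψ : MulAut (FreeGroup (Fin (k + 1)))}
    (h : ∀ p, ψ (of p) ∈ doubleCoset (of p) (Fsub k) (Fsub k)) :
    PreservesDoubleCoset (Fsub k) (of 0) ψ := by
  refine ⟨fun w hw => (Subgroup.closure_le ((Fsub k).comap ψ.toMonoidHom)).2 ?_ hw, h 0⟩
  rintro _ ⟨i, rfl⟩
  obtain ⟨a, ha, b, hb, hab⟩ := mem_doubleCoset.1 (h i.succ)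
  show ψ (of i.succ) ∈ Fsub k
  rw [hab]
  exact mul_mem (mul_mem ha (of_mem_Fsub i.succ_ne_zero)) hb

section Generators

variable {i j : Fin (k + 1)}

lemma nL_apply_of (h : i ≠ j) (p : Fin (k + 1)) :
    nL i j (of p) = if p = i then of j * of p else of p := by
  simp [nL, h, lA]

lemma nL_inv_apply_of (h : i ≠ j) (p : Fin (k + 1)) :
    (nL i j)⁻¹ (of p) = if p = i then (of j)⁻¹ * of p else of p := by
  simp [nL, h, lB, MulAut.inv_apply]

lemma nR_apply_of (h : i ≠ j) (p : Fin (k + 1)) :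
    nR i j (of p) = if p = i then of p * of j else of p := by
  simp [nR, h, rA]

lemma nR_inv_apply_of (h : i ≠ j) (p : Fin (k + 1)) :
    (nR i j)⁻¹ (of p) = if p = i then of p * (of j)⁻¹ else of p := by
  simp [nR, h, rB, MulAut.inv_apply]

lemma nL_mem_doubleCosetStabilizer (hj : j ≠ 0) :
    nL i j ∈ doubleCosetStabilizer (Fsub k) (of 0) := by
  by_cases h : i = j
  · rw [nL, dif_pos h]
    exact one_mem _
  refine ⟨preservesDoubleCoset_Fsub_of_forall fun p => ?_,
    preservesDoubleCoset_Fsub_of_forall fun p => ?_⟩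
  · rw [nL_apply_of h]
    split_ifs
    · exact mul_mem_doubleCoset_left (of_mem_Fsub hj) (mem_doubleCoset_self _ _ _)
    · exact mem_doubleCoset_self _ _ _
  · rw [nL_inv_apply_of h]
    split_ifs
    · exact mul_mem_doubleCoset_left (inv_mem (of_mem_Fsub hj)) (mem_doubleCoset_self _ _ _)
    · exact mem_doubleCoset_self _ _ _

lemma nR_mem_doubleCosetStabilizer (hj : j ≠ 0) :
    nR i j ∈ doubleCosetStabilizer (Fsub k) (of 0) := by
  by_cases h : i = j
  · rw [nR, dif_pos h]
    exact one_mem _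
  refine ⟨preservesDoubleCoset_Fsub_of_forall fun p => ?_,
    preservesDoubleCoset_Fsub_of_forall fun p => ?_⟩
  · rw [nR_apply_of h]
    split_ifs
    · exact mul_mem_doubleCoset_right (of_mem_Fsub hj) (mem_doubleCoset_self _ _ _)
    · exact mem_doubleCoset_self _ _ _
  · rw [nR_inv_apply_of h]
    split_ifs
    · exact mul_mem_doubleCoset_right (inv_mem (of_mem_Fsub hj)) (mem_doubleCoset_self _ _ _)
    · exact mem_doubleCoset_self _ _ _

end Generators

lemma Ak_le_doubleCosetStabilizer : Ak k ≤ doubleCosetStabilizer (Fsub k) (of 0) := by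
  refine (Subgroup.closure_le _).2 ?_
  rintro _ ⟨i, j, -, hj, rfl | rfl | rfl | rfl⟩
  · exact nL_mem_doubleCosetStabilizer hj
  · exact inv_mem (nL_mem_doubleCosetStabilizer hj)
  · exact nR_mem_doubleCosetStabilizer hj
  · exact inv_mem (nR_mem_doubleCosetStabilizer hj)

lemma exists_apply_of_zero_eq {ψ : MulAut (FreeGroup (Fin (k + 1)))} (hψ : ψ ∈ Ak k) :
    ∃ l r : FreeGroup (Fin k), ψ (of 0) = embF k l * of 0 * embF k r := by
  have h := (Ak_le_doubleCosetStabilizer hψ).1.2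
  rw [← range_embF] at h
  obtain ⟨_, ⟨l, rfl⟩, _, ⟨r, rfl⟩, h⟩ := mem_doubleCoset.1 h
  exact ⟨l, r, h⟩

def swapRep (k : ℕ) :
    FreeGroup (Fin (k + 1)) →* Equiv.Perm (FreeGroup (Fin k) ⊕ FreeGroup (Fin k)) :=
  lift (Fin.cases (Equiv.sumComm _ _)
    fun i => Equiv.sumCongr (Equiv.mulLeft (of i)) (Equiv.refl _))

lemma swapRep_embF (w : FreeGroup (Fin k)) :
    swapRep k (embF k w) = Equiv.sumCongr (Equiv.mulLeft w) (Equiv.refl _) := by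
  have h : (swapRep k).comp (embF k) = (Equiv.Perm.sumCongrHom _ _).comp
      ((MonoidHom.inl _ _).comp (MulAction.toPermHom _ _)) :=
    ext_hom _ _ fun i => by ext (x | x) <;> simp [swapRep, embF]
  exact DFunLike.congr_fun h w

lemma swapRep_of_zero : swapRep k (of 0) = Equiv.sumComm _ _ := by
  simp [swapRep]

lemma embF_mul_of_zero_mul_embF_inj {l r l' r' : FreeGroup (Fin k)} :
    embF k l * of 0 * embF k r = embF k l' * of 0 * embF k r' ↔ l = l' ∧ r = r' := by
  refine ⟨fun h => ?_, by rintro ⟨rfl, rfl⟩; rfl⟩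
  have hσ := congrArg (swapRep k) h
  simp only [_root_.map_mul, swapRep_embF, swapRep_of_zero] at hσ
  have hl := Equiv.ext_iff.1 hσ (Sum.inr 1)
  have hr := Equiv.ext_iff.1 hσ (Sum.inl 1)
  simp only [Equiv.Perm.mul_apply, Equiv.sumCongr_apply, Sum.map_inl, Sum.map_inr,
    Equiv.sumComm_apply, Sum.swap_inl, Sum.swap_inr, Equiv.coe_mulLeft, Equiv.coe_refl, id_eq,
    mul_one, Sum.inl.injEq, Sum.inr.injEq] at hl hr
  exact ⟨hl, hr⟩

-- The inverse on `l` is what makes `sandwich` multiplicative in the pair.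
def sandwich (lr : FreeGroup (Fin k) × FreeGroup (Fin k)) :
    FreeGroup (Fin (k + 1)) →* FreeGroup (Fin (k + 1)) :=
  lift (Fin.cases ((embF k lr.1)⁻¹ * of 0 * embF k lr.2) fun i => of i.succ)

lemma sandwich_of_zero (lr : FreeGroup (Fin k) × FreeGroup (Fin k)) :
    sandwich lr (of 0) = (embF k lr.1)⁻¹ * of 0 * embF k lr.2 := by
  simp [sandwich]

lemma sandwich_of_succ (lr : FreeGroup (Fin k) × FreeGroup (Fin k)) (i : Fin k) :
    sandwich lr (of i.succ) = of i.succ := by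
  simp [sandwich]

lemma sandwich_comp_embF (lr : FreeGroup (Fin k) × FreeGroup (Fin k)) :
    (sandwich lr).comp (embF k) = embF k :=
  ext_hom _ _ fun i => by simp [sandwich, embF]

lemma sandwich_mul (p q : FreeGroup (Fin k) × FreeGroup (Fin k)) :
    sandwich (p * q) = (sandwich p).comp (sandwich q) := by
  refine ext_hom _ _ fun i => ?_
  induction i using Fin.cases with
  | zero =>
    have hp : ∀ w, sandwich p (embF k w) = embF k w :=
      DFunLike.congr_fun (sandwich_comp_embF p)
    simp only [MonoidHom.comp_apply, sandwich_of_zero, _root_.map_mul, _root_.map_inv, hp,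
      Prod.fst_mul, Prod.snd_mul]
    group
  | succ i => simp only [MonoidHom.comp_apply, sandwich_of_succ]

lemma sandwich_one : sandwich (1 : FreeGroup (Fin k) × FreeGroup (Fin k)) = MonoidHom.id _ :=
  ext_hom _ _ fun i => by cases i using Fin.cases <;> simp [sandwich_of_zero, sandwich_of_succ]

def sandwichAut (k : ℕ) :
    FreeGroup (Fin k) × FreeGroup (Fin k) →* MulAut (FreeGroup (Fin (k + 1))) where
  toFun p := (sandwich p).toMulEquiv (sandwich p⁻¹)
    (by rw [← sandwich_mul, inv_mul_cancel, sandwich_one])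
    (by rw [← sandwich_mul, mul_inv_cancel, sandwich_one])
  map_one' := MulEquiv.ext fun x => by simp [sandwich_one]
  map_mul' p q := MulEquiv.ext fun x => by simp [sandwich_mul]

lemma sandwichAut_apply (p : FreeGroup (Fin k) × FreeGroup (Fin k)) (x : FreeGroup (Fin (k + 1))) :
    sandwichAut k p x = sandwich p x := rfl

lemma sandwichAut_inl_of (i : Fin k) : sandwichAut k (of i, 1) = (nL 0 i.succ)⁻¹ := by
  refine MulEquiv.toMonoidHom_injective (ext_hom _ _ fun p => ?_)
  rw [MulEquiv.coe_toMonoidHom, MulEquiv.coe_toMonoidHom, sandwichAut_apply,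
    nL_inv_apply_of i.succ_ne_zero.symm]
  induction p using Fin.cases with
  | zero => simp [sandwich_of_zero, embF]
  | succ m => simp [sandwich_of_succ, Fin.succ_ne_zero]

lemma sandwichAut_inr_of (i : Fin k) : sandwichAut k (1, of i) = nR 0 i.succ := by
  refine MulEquiv.toMonoidHom_injective (ext_hom _ _ fun p => ?_)
  rw [MulEquiv.coe_toMonoidHom, MulEquiv.coe_toMonoidHom, sandwichAut_apply,
    nR_apply_of i.succ_ne_zero.symm]
  induction p using Fin.cases with
  | zero => simp [sandwich_of_zero, embF]
  | succ m => simp [sandwich_of_succ, Fin.succ_ne_zero]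

lemma sandwichAut_mem_Ak (p : FreeGroup (Fin k) × FreeGroup (Fin k)) :
    sandwichAut k p ∈ Ak k := by
  have hl : ((sandwichAut k).comp (MonoidHom.inl _ _)).range ≤ Ak k :=
    (FreeGroup.range_le_iff _ _).2 fun i => by
      simpa [sandwichAut_inl_of] using inv_mem (nL_mem 0 i.succ i.succ_ne_zero)
  have hr : ((sandwichAut k).comp (MonoidHom.inr _ _)).range ≤ Ak k :=
    (FreeGroup.range_le_iff _ _).2 fun i => by
      simpa [sandwichAut_inr_of] using nR_mem 0 i.succ i.succ_ne_zero
  rw [← Prod.fst_mul_snd p, _root_.map_mul]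
  exact mul_mem (hl ⟨p.1, rfl⟩) (hr ⟨p.2, rfl⟩)

def sandwichKer (k : ℕ) : FreeGroup (Fin k) × FreeGroup (Fin k) →* Kker k :=
  ((sandwichAut k).codRestrict (Ak k) sandwichAut_mem_Ak).codRestrict (Kker k)
    fun p => sandwich_of_succ p

lemma sandwichKer_apply_of_zero (p : FreeGroup (Fin k) × FreeGroup (Fin k)) :
    ((sandwichKer k p : Ak k) : MulAut (FreeGroup (Fin (k + 1)))) (of 0)
      = (embF k p.1)⁻¹ * of 0 * embF k p.2 :=
  sandwich_of_zero p

lemma Kker_ext {ψ φ : Kker k}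
    (h : ((ψ : Ak k) : MulAut (FreeGroup (Fin (k + 1)))) (of 0)
      = ((φ : Ak k) : MulAut (FreeGroup (Fin (k + 1)))) (of 0)) : ψ = φ := by
  refine Subtype.ext (Subtype.ext (MulEquiv.toMonoidHom_injective (ext_hom _ _ fun p => ?_)))
  induction p using Fin.cases with
  | zero => exact h
  | succ i => exact (ψ.2 i).trans (φ.2 i).symm

lemma sandwichKer_bijective : Function.Bijective (sandwichKer k) := by
  refine ⟨fun p q hpq => ?_, fun ψ => ?_⟩
  · have h := congrArg
      (fun ψ : Kker k => ((ψ : Ak k) : MulAut (FreeGroup (Fin (k + 1)))) (of 0)) hpq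
    simp only [sandwichKer_apply_of_zero, ← _root_.map_inv] at h
    obtain ⟨h1, h2⟩ := embF_mul_of_zero_mul_embF_inj.1 h
    exact Prod.ext (inv_injective h1) h2
  · obtain ⟨l, r, h⟩ := exists_apply_of_zero_eq (ψ : Ak k).2
    refine ⟨(l⁻¹, r), Kker_ext ?_⟩
    rw [sandwichKer_apply_of_zero, h, _root_.map_inv, inv_inv]

end PRA

open PRA in
/-- Every `ψ ∈ A_k` maps the subgroup `F_k = ⟨x_1,…,x_k⟩` of `F_{k+1}` onto
itself; every `ψ ∈ A_k` fixing each `x_i` (`1 ≤ i ≤ k`) sends `x_0` to `l·x_0·r` for unique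
`l, r ∈ F_k`; and the assignment `j(ψ) = (l⁻¹, r)` is a group isomorphism from the kernel of
the restriction homomorphism onto `F_k × F_k`. -/
theorem statement12 (k : ℕ) :
    (∀ ψ : MulAut (FreeGroup (Fin (k + 1))), ψ ∈ Ak k →
      Subgroup.map ψ.toMonoidHom (Fsub k) = Fsub k) ∧
    (∀ ψ : Ak k, ψ ∈ Kker k →
      ∃! lr : FreeGroup (Fin k) × FreeGroup (Fin k),
        (ψ : MulAut (FreeGroup (Fin (k + 1)))) (FreeGroup.of 0)
          = embF k lr.1 * FreeGroup.of 0 * embF k lr.2) ∧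
    ∃ jiso : Kker k ≃* FreeGroup (Fin k) × FreeGroup (Fin k),
      ∀ ψ : Kker k,
        ((ψ : Ak k) : MulAut (FreeGroup (Fin (k + 1)))) (FreeGroup.of 0)
          = embF k ((jiso ψ).1)⁻¹ * FreeGroup.of 0 * embF k (jiso ψ).2 := by
  refine ⟨fun ψ hψ => map_eq_of_mem_doubleCosetStabilizer (Ak_le_doubleCosetStabilizer hψ),
    fun ψ _ => ?_, ?_⟩
  · obtain ⟨l, r, h⟩ := exists_apply_of_zero_eq ψ.2
    refine ⟨(l, r), h, fun lr hlr => ?_⟩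
    obtain ⟨h1, h2⟩ := embF_mul_of_zero_mul_embF_inj.1 (hlr.symm.trans h)
    exact Prod.ext h1 h2
  · let e := MulEquiv.ofBijective (sandwichKer k) sandwichKer_bijective
    refine ⟨e.symm, fun ψ => ?_⟩
    rw [_root_.map_inv, ← sandwichKer_apply_of_zero]
    exact congrArg
      (fun φ : Kker k => ((φ : Ak k) : MulAut (FreeGroup (Fin (k + 1)))) (FreeGroup.of 0))
      (e.apply_symm_apply ψ).symm
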